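/- Let M be a loopless matroid of rank n on E = {0,...,N} and Σ(M) the fan in ℝ^{N+1} whose k-dimensional cones are spanned by {e_{J₁},...,e_{J_k}} for flags of flats J₁ ⊊ ... ⊊ J_k. Then the homology group F_k(Σ(M)) ⊆ ⋀^k ℤ^{N+1} is generated by the subgroups F_k(Σ(J)) where J runs over the flats of M of rank exactly k; equivalently, every element e_{J₁} ∧ ... ∧ e_{J_k} for a flag of flats is a ℤ-linear combination of such elements with flags consisting of flats of ranks 1, 2, ..., k respectively. -/

import Mathlib

open ExteriorAlgebra

set_option maxHeartbeats 1000000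
set_option synthInstance.maxHeartbeats 400000

open Classical in
/-- `e_S`: sum of the standard basis vectors of `ℤ^n` indexed by `S`. -/
noncomputable def eS {n : ℕ} (S : Set (Fin n)) : Fin n → ℤ := fun j => if j ∈ S then 1 else 0

/-- the `i`-th standard basis vector of `ℤ^n`. -/
noncomputable def fb {n : ℕ} (i : Fin n) : Fin n → ℤ := Pi.single i 1

/-- The pairing of a pure `k`-fold wedge `v₁ ∧ ... ∧ v_k` of vectors of `V` with the
exterior algebra of the dual module, determined by
`⟨w₁ ∧ ... ∧ w_k, v₁ ∧ ... ∧ v_k⟩ = det (wᵢ (vⱼ))` on the degree-`k` part and `0` on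
other degrees. -/
noncomputable def pairPure {V : Type*} [AddCommGroup V] [Module ℤ V] (k : ℕ)
    (v : Fin k → V) : ExteriorAlgebra ℤ (Module.Dual ℤ V) →ₗ[ℤ] ℤ :=
  ExteriorAlgebra.liftAlternating fun m =>
    if h : m = k then
      h ▸ (Matrix.detRowAlternating.compLinearMap
        (LinearMap.pi fun j : Fin k => LinearMap.applyₗ (v j)))
    else 0

/-- A matroid is loopless if every singleton of the ground set is independent. -/
def Matroid.Loopless' {α : Type*} (M : Matroid α) : Prop := ∀ x ∈ M.E, M.Indep {x}

/-- The rank of a set in a matroid: the largest cardinality of an independent subset. -/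
noncomputable def Matroid.rk' {α : Type*} (M : Matroid α) (X : Set α) : ℕ :=
  sSup {m : ℕ | ∃ I, I ⊆ X ∧ M.Indep I ∧ I.ncard = m}

/-! Induct on the total rank `∑ rk J_i` of the flag `J`. Let `i` be the first index with
`rk J_i ≠ i + 1` and `X` the flat just below it (`J_{i-1}`, or `∅`, which is a flat since `M` is
loopless), so `rk X = i`. The flats `F = cl(X ∪ {a})`, `a ∈ J_i \ X`, cover `X` and the sets `F \ X`
partition `J_i \ X`, whence `e_{J_i} - e_X = ∑_F (e_F - e_X)`. Since the wedge with `e_X` in slot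
`i` vanishes, the wedge of `J` is the sum of the wedges of the flags with `J_i` replaced by some
`F`, of rank `≤ i + 1 < rk J_i`. -/

open Set

namespace Matroid

variable {α : Type*} {M : Matroid α} {X Y : Set α} {a : α}

lemma Loopless'.loopless (hM : M.Loopless') : M.Loopless :=
  loopless_iff_forall_isNonloop.2 fun e he => indep_singleton.1 (hM e he)

lemma isFlat_empty [M.Loopless] : M.IsFlat ∅ := by
  have h := M.isFlat_closure ∅
  rwa [closure_empty, loops_eq_empty] at h

lemma IsFlat.closure_insert_eq_of_mem (hX : M.IsFlat X) (h : a ∈ M.closure (insert b X) \ X) :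
    M.closure (insert a X) = M.closure (insert b X) :=
  closure_insert_congr (by rwa [hX.closure])

lemma IsFlat.subset_closure_insert (hX : M.IsFlat X) (a : α) : X ⊆ M.closure (insert a X) :=
  (M.subset_closure X hX.subset_ground).trans (M.closure_subset_closure (subset_insert a X))

lemma IsFlat.closure_insert_subset (hY : M.IsFlat Y) (ha : a ∈ Y) (hXY : X ⊆ Y) :
    M.closure (insert a X) ⊆ Y :=
  hY.closure ▸ M.closure_subset_closure (insert_subset ha hXY)

lemma IsFlat.ssubset_closure_insert (hX : M.IsFlat X) (ha : a ∈ M.E \ X) :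
    X ⊂ M.closure (insert a X) :=
  (ssubset_iff_of_subset (hX.subset_closure_insert a)).2
    ⟨a, M.mem_closure_of_mem' (mem_insert a X) ha.1, ha.2⟩

lemma IsFlat.biUnion_closure_insert_sdiff (hY : M.IsFlat Y) (hXY : X ⊆ Y) :
    ⋃ a ∈ Y \ X, M.closure (insert a X) \ X = Y \ X := by
  refine subset_antisymm (iUnion₂_subset fun a ha => sdiff_subset_sdiff_left ?_) fun a ha => ?_
  · exact hY.closure_insert_subset ha.1 hXY
  · exact mem_biUnion ha ⟨M.mem_closure_of_mem' (mem_insert a X) (hY.subset_ground ha.1), ha.2⟩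

section Finite

variable [Finite α]

lemma cast_rk'_eq_eRk (M : Matroid α) (X : Set α) : (M.rk' X : ℕ∞) = M.eRk X := by
  obtain ⟨I, hI⟩ := M.exists_isBasis' X
  have hmax : IsGreatest {m | ∃ J ⊆ X, M.Indep J ∧ J.ncard = m} I.ncard := by
    refine ⟨⟨I, hI.subset, hI.indep, rfl⟩, ?_⟩
    rintro _ ⟨J, hJX, hJ, rfl⟩
    rw [← Nat.cast_le (α := ℕ∞), J.toFinite.cast_ncard_eq, I.toFinite.cast_ncard_eq,
      hI.encard_eq_eRk]
    exact hJ.encard_le_eRk_of_subset hJX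
  rw [rk', hmax.csSup_eq, I.toFinite.cast_ncard_eq, hI.encard_eq_eRk]

lemma rk'_empty (M : Matroid α) : M.rk' ∅ = 0 := by
  exact_mod_cast (M.cast_rk'_eq_eRk ∅).trans M.eRk_empty

lemma rk'_closure_insert_le (M : Matroid α) (a : α) (X : Set α) :
    M.rk' (M.closure (insert a X)) ≤ M.rk' X + 1 := by
  rw [← Nat.cast_le (α := ℕ∞), Nat.cast_add, Nat.cast_one, cast_rk'_eq_eRk, cast_rk'_eq_eRk,
    eRk_closure_eq]
  exact M.eRk_insert_le_add_one a X

lemma IsFlat.rk'_lt_of_ssubset (hX : M.IsFlat X) (hXY : X ⊂ Y) (hY : Y ⊆ M.E) :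
    M.rk' X < M.rk' Y := by
  obtain ⟨a, haY, haX⟩ := exists_of_ssubset hXY
  have hinsert : M.rk' (insert a X) = M.rk' X + 1 := by
    rw [← Nat.cast_inj (R := ℕ∞), Nat.cast_add, Nat.cast_one, cast_rk'_eq_eRk, cast_rk'_eq_eRk]
    exact eRk_insert_eq_add_one ⟨hY haY, by rwa [hX.closure]⟩
  have hmono : M.rk' (insert a X) ≤ M.rk' Y := by
    rw [← Nat.cast_le (α := ℕ∞), cast_rk'_eq_eRk, cast_rk'_eq_eRk]
    exact M.eRk_mono (insert_subset haY hXY.subset)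
  omega

end Finite

end Matroid

lemma AlternatingMap.map_eq_sum_update_of_map_update_eq_zero {R M N ι β : Type*} [CommRing R]
    [AddCommGroup M] [Module R M] [AddCommGroup N] [Module R N] [DecidableEq ι]
    (f : M [⋀^ι]→ₗ[R] N) {v : ι → M} {i : ι} {w : M} {s : Finset β} {u : β → M}
    (hv : v i - w = ∑ b ∈ s, (u b - w)) (hw : f (Function.update v i w) = 0) :
    f v = ∑ b ∈ s, f (Function.update v i (u b)) := by
  have hvi : v i = w + ∑ b ∈ s, (u b - w) := by rw [← hv, add_sub_cancel]
  conv_lhs => rw [← Function.update_eq_self i v, hvi]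
  simp only [f.map_update_add, f.map_update_sum, f.map_update_sub, hw, zero_add, sub_zero]

lemma StrictMono.update_of_lt {ι α : Type*} [LinearOrder ι] [Preorder α] [DecidableEq ι]
    {c : ι → α} (hc : StrictMono c) {i : ι} {x : α} (hlt : ∀ j < i, c j < x) (hle : x ≤ c i) :
    StrictMono (Function.update c i x) := by
  intro s t hst
  simp only [Function.update_apply]
  split_ifs with hs ht ht
  · exact absurd (hs.trans ht.symm) hst.ne
  · exact hle.trans_lt (hc (hs ▸ hst))
  · exact hlt s (ht ▸ hst)
  · exact hc hst

section eS

variable {n : ℕ}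

lemma eS_eq_indicator (S : Set (Fin n)) : eS S = S.indicator 1 := by
  ext j
  by_cases h : j ∈ S <;> simp [eS, h]

@[simp]
lemma eS_empty : eS (∅ : Set (Fin n)) = 0 := by
  ext j
  simp [eS]

open Classical in
lemma Matroid.IsFlat.eS_sub_eS_eq_sum {M : Matroid (Fin n)} {X Y : Set (Fin n)}
    (hX : M.IsFlat X) (hY : M.IsFlat Y) (hXY : X ⊆ Y) :
    eS Y - eS X =
      ∑ F ∈ (Y \ X).toFinset.image (fun a => M.closure (insert a X)), (eS F - eS X) := by
  set A := (Y \ X).toFinset.image (fun a => M.closure (insert a X)) with hA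
  have hdisj : (A : Set (Set (Fin n))).PairwiseDisjoint (· \ X) := by
    simp only [hA, Finset.coe_image, coe_toFinset]
    rintro _ ⟨a, -, rfl⟩ _ ⟨b, -, rfl⟩ hab
    refine Set.disjoint_left.2 fun j hja hjb => hab ?_
    dsimp only at hja hjb ⊢
    rw [← hX.closure_insert_eq_of_mem hja, hX.closure_insert_eq_of_mem hjb]
  have hsub : ∀ F ∈ A, X ⊆ F := by
    simp only [hA, Finset.mem_image]
    rintro _ ⟨a, -, rfl⟩
    exact hX.subset_closure_insert a
  simp only [eS_eq_indicator]
  rw [← indicator_sdiff hXY,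
    Finset.sum_congr rfl fun F hF => (indicator_sdiff (hsub F hF) 1).symm]
  ext j
  rw [Finset.sum_apply, ← Finset.indicator_biUnion_apply _ _ hdisj, Finset.set_biUnion_finset_image]
  simp only [mem_toFinset, hY.biUnion_closure_insert_sdiff hXY]

end eS

section Flags

variable {n k : ℕ} {M : Matroid (Fin n)} {c : Fin k → Set (Fin n)} {X : Set (Fin n)}

lemma ιMulti_eS_mem_span_update_closure_insert {i : Fin k} (hc : ∀ j, M.IsFlat (c j))
    (hX : M.IsFlat X) (hXi : X ⊆ c i)
    (hzero : ιMulti ℤ k (Function.update (fun j => eS (c j)) i (eS X)) = 0) :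
    ιMulti ℤ k (fun j => eS (c j)) ∈ Submodule.span ℤ
      ((fun a => ιMulti ℤ k fun j => eS (Function.update c i (M.closure (insert a X)) j)) ''
        (c i \ X)) := by
  classical
  rw [(ιMulti ℤ k).map_eq_sum_update_of_map_update_eq_zero (hX.eS_sub_eS_eq_sum (hc i) hXi) hzero]
  refine Submodule.sum_mem _ fun F hF => Submodule.subset_span ?_
  obtain ⟨a, ha, rfl⟩ := Finset.mem_image.1 hF
  exact ⟨a, mem_toFinset.1 ha, by simp only [Function.apply_update (fun _ => eS)]⟩

lemma exists_isFlat_rk'_eq_below [M.Loopless] (hc : ∀ j, M.IsFlat (c j)) (hmono : StrictMono c)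
    (i : Fin k) (hmin : ∀ j < i, M.rk' (c j) = j + 1) :
    ∃ X, M.IsFlat X ∧ M.rk' X = i ∧ (∀ j < i, c j ⊆ X) ∧ X ⊆ c i ∧
      ιMulti ℤ k (Function.update (fun j => eS (c j)) i (eS X)) = 0 := by
  obtain ⟨_ | p, hi⟩ := i
  · refine ⟨∅, Matroid.isFlat_empty, M.rk'_empty, fun j hj => (Nat.not_lt_zero _ hj).elim,
      empty_subset _, ?_⟩
    rw [eS_empty]
    exact (ιMulti ℤ k).map_update_zero _ _
  · let q : Fin k := ⟨p, by omega⟩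
    have hq : q < ⟨p + 1, hi⟩ := Nat.lt_succ_self p
    refine ⟨c q, hc q, hmin q hq, fun j hj => hmono.monotone (Nat.lt_succ_iff.1 hj),
      (hmono hq).le, ?_⟩
    exact (ιMulti ℤ k).map_eq_zero_of_eq _ (by simp [Function.update_of_ne hq.ne]) hq.ne

end Flags

theorem ιMulti_eS_mem_span_rk'_eq_succ {n k : ℕ} {M : Matroid (Fin n)} [M.Loopless]
    {c : Fin k → Set (Fin n)} (hc : ∀ j, M.IsFlat (c j)) (hmono : StrictMono c) :
    ιMulti ℤ k (fun j => eS (c j)) ∈ Submodule.span ℤ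
      {x | ∃ c : Fin k → Set (Fin n), (∀ i, M.IsFlat (c i)) ∧ StrictMono c ∧
        (∀ i, M.rk' (c i) = (i : ℕ) + 1) ∧ x = ιMulti ℤ k fun i => eS (c i)} := by
  induction hsum : ∑ j, M.rk' (c j) using Nat.strong_induction_on generalizing c with
  | _ m ih =>
  by_cases hstd : ∀ j, M.rk' (c j) = j + 1
  · exact Submodule.subset_span ⟨c, hc, hmono, hstd, rfl⟩
  obtain ⟨i, hi, hmin⟩ := wellFounded_lt.has_min {j | M.rk' (c j) ≠ j + 1} (not_forall.1 hstd)
  obtain ⟨X, hX, hXrk, hbelow, hXi, hzero⟩ := exists_isFlat_rk'_eq_below hc hmono i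
    fun j hj => not_not.1 fun h => hmin j h hj
  rcases hXi.eq_or_ssubset with rfl | hXi
  · rw [Function.update_eq_self] at hzero
    rw [hzero]
    exact zero_mem _
  have hrk : (i : ℕ) + 1 < M.rk' (c i) := by
    have hlt := hX.rk'_lt_of_ssubset hXi (hc i).subset_ground
    have hne : M.rk' (c i) ≠ i + 1 := hi
    omega
  refine Submodule.span_le.2 ?_ (ιMulti_eS_mem_span_update_closure_insert hc hX hXi.subset hzero)
  rintro _ ⟨a, ha, rfl⟩
  have hXF : X ⊂ M.closure (insert a X) :=
    hX.ssubset_closure_insert ⟨(hc i).subset_ground ha.1, ha.2⟩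
  have hFrk : M.rk' (M.closure (insert a X)) < M.rk' (c i) :=
    (M.rk'_closure_insert_le a X).trans_lt (by omega)
  refine ih _ ?_ ?_ (hmono.update_of_lt (fun j hj => (hbelow j hj).trans_lt hXF)
    ((hc i).closure_insert_subset ha.1 hXi.subset)) rfl
  · rw [← hsum]
    refine Finset.sum_lt_sum (fun j _ => ?_) ⟨i, Finset.mem_univ i, by simpa using hFrk⟩
    rcases eq_or_ne j i with rfl | hj
    · simpa using hFrk.le
    · simp [hj]
  · intro j
    rcases eq_or_ne j i with rfl | hj
    · simp
    · simpa [hj] using hc j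

theorem stmt_4_general {N : ℕ} (M : Matroid (Fin (N + 1))) (hM : M.Loopless') (k : ℕ) :
    Submodule.span ℤ {x : ExteriorAlgebra ℤ (Fin (N + 1) → ℤ) |
        ∃ c : Fin k → Set (Fin (N + 1)), (∀ i, M.IsFlat (c i)) ∧ StrictMono c ∧
          x = ιMulti ℤ k fun i => eS (c i)} =
    Submodule.span ℤ {x : ExteriorAlgebra ℤ (Fin (N + 1) → ℤ) |
        ∃ c : Fin k → Set (Fin (N + 1)), (∀ i, M.IsFlat (c i)) ∧ StrictMono c ∧
          (∀ i, M.rk' (c i) = (i : ℕ) + 1) ∧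
          x = ιMulti ℤ k fun i => eS (c i)} := by
  have := hM.loopless
  refine le_antisymm (Submodule.span_le.2 ?_) (Submodule.span_mono ?_)
  · rintro _ ⟨c, hc, hmono, rfl⟩
    exact ιMulti_eS_mem_span_rk'_eq_succ hc hmono
  · rintro _ ⟨c, hc, hmono, -, rfl⟩
    exact ⟨c, hc, hmono, rfl⟩

/-- The homology group `F_k(Σ(M))`, spanned by the wedges
`e_{J₁} ∧ ... ∧ e_{J_k}` over flags of flats `J₁ ⊊ ... ⊊ J_k` of a loopless matroid `M`
on `{0, ..., N}`, is already spanned by those wedges coming from flags whose flats have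
ranks `1, 2, ..., k` respectively (equivalently, it is generated by the subgroups
`F_k(Σ(J))` over the rank-`k` flats `J`). -/
theorem stmt_4 {N : ℕ} (M : Matroid (Fin (N + 1))) (hM : M.Loopless')
    (hE : M.E = Set.univ) (k : ℕ) :
    Submodule.span ℤ {x : ExteriorAlgebra ℤ (Fin (N + 1) → ℤ) |
        ∃ c : Fin k → Set (Fin (N + 1)), (∀ i, M.IsFlat (c i)) ∧ StrictMono c ∧
          x = ιMulti ℤ k fun i => eS (c i)} =
    Submodule.span ℤ {x : ExteriorAlgebra ℤ (Fin (N + 1) → ℤ) |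
        ∃ c : Fin k → Set (Fin (N + 1)), (∀ i, M.IsFlat (c i)) ∧ StrictMono c ∧
          (∀ i, M.rk' (c i) = (i : ℕ) + 1) ∧
          x = ιMulti ℤ k fun i => eS (c i)} :=
  stmt_4_general M hM k
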